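/- arXiv:2004.06581 — 2 statements merged into one kernel-verified Lean document; each statement's English description precedes it below -/
import Mathlib

section
/- Let A be a WFA over ℚ, α ∈ ℚ, and k ≥ 1. Let B be a WFA such that W_B(w) = (W_A(w) + 1 − α)(1 + α − W_A(w)) for all w ∈ Σ*. Then there exists a word w ∈ Σ^{≤k} with W_B(w) ≥ 1 if and only if there exists a word w ∈ Σ^{≤k} with W_A(w) = α. -/
def wordMatrix {n σ : Type*} [Fintype n] [DecidableEq n]
    (M : σ → Matrix n n ℚ) (w : List σ) : Matrix n n ℚ :=
  (w.map M).prod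

def weight {n σ : Type*} [Fintype n] [DecidableEq n]
    (i f : n → ℚ) (M : σ → Matrix n n ℚ) (w : List σ) : ℚ :=
  dotProduct i (Matrix.mulVec (wordMatrix M w) f)

theorem add_one_sub_mul_one_add_sub {R : Type*} [CommRing R] (x a : R) :
    (x + 1 - a) * (1 + a - x) = 1 - (x - a) ^ 2 := by
  ring

theorem one_le_add_one_sub_mul_one_add_sub_iff {R : Type*} [CommRing R] [LinearOrder R]
    [IsStrictOrderedRing R] (x a : R) :
    1 ≤ (x + 1 - a) * (1 + a - x) ↔ x = a := by
  rw [add_one_sub_mul_one_add_sub, le_sub_self_iff, sq_nonpos_iff, sub_eq_zero]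

theorem berp_to_btrp_general {n₁ n₂ σ : Type*} [Fintype n₁] [DecidableEq n₁]
    [Fintype n₂] [DecidableEq n₂]
    (iA fA : n₁ → ℚ) (MA : σ → Matrix n₁ n₁ ℚ)
    (iB fB : n₂ → ℚ) (MB : σ → Matrix n₂ n₂ ℚ)
    (α : ℚ) (k : ℕ)
    (hB : ∀ w : List σ,
      weight iB fB MB w
        = (weight iA fA MA w + 1 - α) * (1 + α - weight iA fA MA w)) :
    (∃ w : List σ, 1 ≤ w.length ∧ w.length ≤ k ∧ 1 ≤ weight iB fB MB w) ↔
    (∃ w : List σ, 1 ≤ w.length ∧ w.length ≤ k ∧ weight iA fA MA w = α) := by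
  simp only [hB, one_le_add_one_sub_mul_one_add_sub_iff]

/-- if `W_B(w) = (W_A(w) + 1 − α)(1 + α − W_A(w))` for every word,
then some word of length in `[1,k]` has `W_B`-weight `≥ 1` iff some word of
length in `[1,k]` has `W_A`-weight exactly `α`. -/
theorem berp_to_btrp {n₁ n₂ σ : Type*} [Fintype n₁] [DecidableEq n₁]
    [Fintype n₂] [DecidableEq n₂]
    (iA fA : n₁ → ℚ) (MA : σ → Matrix n₁ n₁ ℚ)
    (iB fB : n₂ → ℚ) (MB : σ → Matrix n₂ n₂ ℚ)
    (α : ℚ) (k : ℕ) (hk : 1 ≤ k)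
    (hB : ∀ w : List σ,
      weight iB fB MB w
        = (weight iA fA MA w + 1 - α) * (1 + α - weight iA fA MA w)) :
    (∃ w : List σ, 1 ≤ w.length ∧ w.length ≤ k ∧ 1 ≤ weight iB fB MB w) ↔
    (∃ w : List σ, 1 ≤ w.length ∧ w.length ≤ k ∧ weight iA fA MA w = α) :=
  berp_to_btrp_general iA fA MA iB fB MB α k hB
end

section
/- Let G = (V,E) be a simple directed graph, n = |V|, μ : V → {first n primes} an injection, and let A be the WFA with states V, alphabet {ℓ_{uv} | (u,v) ∈ E}, transition matrix M_{ℓ_{uv}} having entry μ(v) at position (u,v) and 0 elsewhere, and all-ones initial and final vectors. If G has a Hamiltonian cycle e_1⋯e_n, then the word ℓ_{e_1}⋯ℓ_{e_n} (the labels of the cycle's edges in order) has weight exactly p_n# in A. -/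
namespace Matrix

variable {n α : Type*} [Fintype n] [DecidableEq n] [Semiring α]

theorem prod_map_single_of_isChain (c : n × n → α) (p : n × n) (L : List (n × n))
    (h : (p :: L).IsChain fun a b => a.2 = b.1) :
    ((p :: L).map fun q => single q.1 q.2 (c q)).prod
      = single p.1 ((p :: L).getLast (List.cons_ne_nil p L)).2 ((p :: L).map c).prod := by
  induction L generalizing p with
  | nil => simp
  | cons q L ih =>
    obtain ⟨hpq, hq⟩ := List.isChain_cons_cons.mp h
    rw [List.map_cons, List.prod_cons, ih q hq, List.getLast_cons_cons, ← hpq,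
      single_mul_single_same]
    simp only [List.map_cons, List.prod_cons]

theorem one_dotProduct_mulVec_single_one (i j : n) (a : α) :
    (fun _ => 1) ⬝ᵥ (single i j a *ᵥ fun _ => 1) = a := by
  rw [single_mulVec, ← Pi.single, dotProduct_single, one_mul, mul_one]

theorem one_dotProduct_mulVec_prod_map_single_one (c : n × n → α) {L : List (n × n)}
    (hL : L ≠ []) (h : L.IsChain fun a b => a.2 = b.1) :
    (fun _ => 1) ⬝ᵥ ((L.map fun q => single q.1 q.2 (c q)).prod *ᵥ fun _ => 1) = (L.map c).prod := by
  obtain ⟨p, L, rfl⟩ := List.exists_cons_of_ne_nil hL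
  rw [prod_map_single_of_isChain c p L h, one_dotProduct_mulVec_single_one]

end Matrix

theorem prod_eq_prod_range_of_injective {ι M : Type*} [Fintype ι] [CommMonoid M]
    (a : ℕ → M) (f : ι → M) (hf : Function.Injective f)
    (ha : ∀ i, ∃ j < Fintype.card ι, f i = a j) :
    ∏ i, f i = ∏ j ∈ Finset.range (Fintype.card ι), a j := by
  choose idx hidx hfa using ha
  let g : ι → Fin (Fintype.card ι) := fun i => ⟨idx i, hidx i⟩
  have hg : Function.Injective g := fun i k hik => hf <| by
    rw [hfa i, hfa k, show idx i = idx k from Fin.ext_iff.mp hik]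
  have hg_bij : Function.Bijective g :=
    (Fintype.bijective_iff_injective_and_card g).mpr ⟨hg, (Fintype.card_fin _).symm⟩
  rw [← Fin.prod_univ_eq_prod_range]
  exact Fintype.prod_bijective g hg_bij _ _ hfa

/-- in the WFA whose states are the vertices, whose alphabet is
the edge set, whose transition matrix for edge `(u,v)` has the single nonzero
entry `μ(v)` at position `(u,v)`, and whose initial and final vectors are
all-ones, the word labeling a Hamiltonian cycle has weight exactly the
primorial `p_n#` (the product of the first `n = |V|` primes). -/
theorem hamiltonian_cycle_word_weight
    {V : Type*} [Fintype V] [DecidableEq V]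
    (E : V → V → Prop)
    (μ : V → ℕ) (hμ_inj : Function.Injective μ)
    (hμ_range : ∀ v, ∃ j < Fintype.card V, μ v = Nat.nth Nat.Prime j)
    (hn : 0 < Fintype.card V)
    (e : Fin (Fintype.card V) → {p : V × V // E p.1 p.2})
    (hpath : ∀ j : Fin (Fintype.card V), ∀ h : j.val + 1 < Fintype.card V,
      ((e j).val).2 = ((e ⟨j.val + 1, h⟩).val).1)
    (hham : Function.Bijective (fun j => ((e j).val).2)) :
    weight (fun _ : V => (1 : ℚ)) (fun _ : V => (1 : ℚ))
        (fun a : {p : V × V // E p.1 p.2} =>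
          Matrix.single a.val.1 a.val.2 ((μ a.val.2 : ℚ)))
        (List.ofFn e)
      = ∏ j ∈ Finset.range (Fintype.card V), (Nat.nth Nat.Prime j : ℚ) := by
  let L := List.ofFn fun j => (e j).val
  have hL : L ≠ [] := by simp [L]; omega
  have hchain : L.IsChain fun a b => a.2 = b.1 :=
    List.isChain_ofFn.mpr fun i hi => hpath ⟨i, by omega⟩ hi
  have hword : (List.ofFn e).map (fun a => Matrix.single a.val.1 a.val.2 (μ a.val.2 : ℚ))
      = L.map fun q => Matrix.single q.1 q.2 (μ q.2 : ℚ) := by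
    simp only [L, List.map_ofFn]; rfl
  rw [weight, wordMatrix, hword, Matrix.one_dotProduct_mulVec_prod_map_single_one _ hL hchain,
    List.map_ofFn, List.prod_ofFn]
  have hprimes := prod_eq_prod_range_of_injective (fun j => (Nat.nth Nat.Prime j : ℚ))
    (fun j => (μ (e j).val.2 : ℚ)) ((Nat.cast_injective (R := ℚ)).comp (hμ_inj.comp hham.injective))
    fun j => by
      obtain ⟨i, hi, hμi⟩ := hμ_range (e j).val.2
      exact ⟨i, by simpa using hi, by simp [hμi]⟩
  rwa [Fintype.card_fin] at hprimes
end
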